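/- arXiv:2404.19731 — 6 statements merged into one kernel-verified Lean document; each statement's English description precedes it below -/
import Mathlib

section
/- For any prime p and positive integer j, the formal power series identity holds: ((q;q)_∞)^(p^j) ≡ ((q^p;q^p)_∞)^(p^(j-1)) (mod p^j), i.e., every coefficient of the difference of the two power series ∏_{k≥1}(1-q^k)^(p^j) and ∏_{k≥1}(1-q^(pk))^(p^(j-1)) is divisible by p^j. -/
/-!
Frobenius modulo `p` turns `(∏ (1 - q^k))^p` into `∏ (1 - q^(pk))`, so `p ∣ f 1 ^ p - f p` in
`ℤ⟦X⟧`. The classical lifting `p ∣ a - b → p^(i+1) ∣ a^(p^i) - b^(p^i)` then gives the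
congruence modulo `p^j`. Since `f k` is defined coefficientwise, the Frobenius step is done on
the partial products `∏_{j ≤ n} (1 - X^(kj))`, which agree with `f k` up to degree `n`.
-/

open PowerSeries Finset Filter

/-- `f k` is the formal power series `∏_{j≥1} (1 - q^(k·j))` over `ℤ`,
defined coefficientwise via truncated finite products (factors with `k·j > n`
do not affect the coefficient of `q^n`). -/
noncomputable def f (k : ℕ) : PowerSeries ℤ :=
  PowerSeries.mk fun n =>
    PowerSeries.coeff n (∏ j ∈ Finset.Icc 1 n, (1 - (PowerSeries.X : PowerSeries ℤ) ^ (k * j)))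

theorem PowerSeries.C_dvd_iff_forall_dvd_coeff {R : Type*} [CommSemiring R] {c : R}
    {φ : R⟦X⟧} : C c ∣ φ ↔ ∀ n, c ∣ coeff n φ := by
  refine ⟨fun ⟨ψ, hψ⟩ n => ⟨coeff n ψ, by rw [hψ, coeff_C_mul]⟩, fun h => ?_⟩
  choose a ha using h
  exact ⟨mk a, by ext n; rw [coeff_C_mul, coeff_mk, ← ha]⟩

theorem natCast_dvd_prod_one_sub_pow_sub_prod_one_sub_pow {R ι : Type*} [CommRing R] {p : ℕ}
    [Fact p.Prime] (s : Finset ι) (a : ι → R) :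
    (p : R) ∣ (∏ i ∈ s, (1 - a i)) ^ p - ∏ i ∈ s, (1 - a i ^ p) := by
  by_cases hunit : IsUnit (p : R)
  · exact hunit.dvd
  have := CharP.quotient R p hunit
  rw [← Ideal.mem_span_singleton, ← Ideal.Quotient.eq_zero_iff_mem, map_sub, sub_eq_zero]
  simp only [map_pow, map_prod, map_sub, map_one, ← prod_pow, sub_pow_char, one_pow]

section EulerPartialProd

variable (R : Type*) [CommRing R]

noncomputable def eulerPartialProd (k n : ℕ) : R⟦X⟧ :=
  ∏ j ∈ Icc 1 n, (1 - X ^ (k * j))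

theorem X_pow_succ_dvd_eulerPartialProd_sub {k n m : ℕ} (hk : 1 ≤ k) (hnm : n ≤ m) :
    (X : R⟦X⟧) ^ (n + 1) ∣ eulerPartialProd R k m - eulerPartialProd R k n := by
  induction m, hnm using Nat.le_induction with
  | base => simp
  | succ m hnm ih =>
    have hfactor : (X : R⟦X⟧) ^ (n + 1) ∣ X ^ (k * (m + 1)) :=
      pow_dvd_pow X (by nlinarith)
    rw [eulerPartialProd, prod_Icc_succ_top (by omega), ← eulerPartialProd,
      show ∀ a b c : R⟦X⟧, a * (1 - b) - c = (a - c) - a * b by intros; ring]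
    exact dvd_sub ih (dvd_mul_of_dvd_right hfactor _)

end EulerPartialProd

theorem X_pow_succ_dvd_f_sub {k : ℕ} (hk : 1 ≤ k) (n : ℕ) :
    X ^ (n + 1) ∣ f k - eulerPartialProd ℤ k n := by
  rw [X_pow_dvd_iff]
  intro m hm
  have hcoeff := X_pow_dvd_iff.mp
    (X_pow_succ_dvd_eulerPartialProd_sub ℤ hk (Nat.lt_succ_iff.mp hm)) m (Nat.lt_succ_self m)
  rw [map_sub, sub_eq_zero] at hcoeff ⊢
  rw [f, coeff_mk]
  exact hcoeff.symm

theorem natCast_dvd_f_one_pow_sub_f {p : ℕ} (hp : p.Prime) : (p : ℤ⟦X⟧) ∣ f 1 ^ p - f p := by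
  have := Fact.mk hp
  rw [← map_natCast C, C_dvd_iff_forall_dvd_coeff]
  intro n
  have htrunc : X ^ (n + 1) ∣ (f 1 ^ p - f p) -
      (eulerPartialProd ℤ 1 n ^ p - eulerPartialProd ℤ p n) := by
    rw [show ∀ a b c d : ℤ⟦X⟧, (a - b) - (c - d) = (a - c) - (b - d) by intros; ring]
    exact dvd_sub ((X_pow_succ_dvd_f_sub le_rfl n).trans (sub_dvd_pow_sub_pow _ _ _))
      (X_pow_succ_dvd_f_sub hp.one_le n)
  have hfrob : (p : ℤ⟦X⟧) ∣ eulerPartialProd ℤ 1 n ^ p - eulerPartialProd ℤ p n := by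
    have hfrob_prod : eulerPartialProd ℤ p n =
        ∏ j ∈ Icc 1 n, (1 - ((X : ℤ⟦X⟧) ^ (1 * j)) ^ p) :=
      prod_congr rfl fun j _ => by rw [← pow_mul, one_mul, mul_comm]
    rw [hfrob_prod]
    exact natCast_dvd_prod_one_sub_pow_sub_prod_one_sub_pow _ _
  rw [← map_natCast C, C_dvd_iff_forall_dvd_coeff] at hfrob
  have hcoeff := X_pow_dvd_iff.mp htrunc n (Nat.lt_succ_self n)
  rw [map_sub, sub_eq_zero] at hcoeff
  rw [hcoeff]
  exact hfrob n

theorem stmt0 (p j : ℕ) (hp : p.Prime) (hj : 1 ≤ j) :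
    ∀ n : ℕ, ((p : ℤ) ^ j) ∣
      PowerSeries.coeff n (f 1 ^ p ^ j - f p ^ p ^ (j - 1)) := by
  obtain ⟨i, rfl⟩ := Nat.exists_eq_add_of_le' hj
  have h := dvd_sub_pow_of_dvd_sub (natCast_dvd_f_one_pow_sub_f hp) i
  rw [← pow_mul, ← pow_succ', ← map_natCast C, ← map_pow, C_dvd_iff_forall_dvd_coeff] at h
  simpa only [Nat.add_sub_cancel] using h
end

section
/- The Jacobi triple product identity: for |ab|<1, f(a,b) := ∑_{n=-∞}^∞ a^(n(n+1)/2) b^(n(n-1)/2) equals (-a;ab)_∞ (-b;ab)_∞ (ab;ab)_∞. -/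
/-!
Cauchy's proof. Put `q = a * b`. Gauss's `q`-binomial theorem expands
`∏_{m < 2N} (q^N + a q^m)`, which is `a^N q^(C(N,2) + N²)` times the truncated product
`∏_{k < N} (1 + a q^k)(1 + b q^k)`; matching terms gives the finite triple product
`∑_{|n| ≤ N} [2N choose N+n]_q a^(n(n+1)/2) b^(n(n-1)/2)`. This is an identity of polynomials,
so the monomial can be cancelled in `ℤ[a, b]` before specializing. As `N → ∞`, the coefficient
`[2N choose N+n]_q = (q;q)_{2N} / ((q;q)_{N-n} (q;q)_{N+n})` tends to `1 / (q;q)_∞` and stays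
uniformly bounded, so dominated convergence for the theta series yields the identity.
-/

open Finset

namespace JacobiTripleProduct

variable {R : Type*} [CommRing R]

/-- `qBinom q i j` is the Gaussian binomial coefficient `[i + j choose j]_q`; indexing by the two
parts of `i + j` avoids truncated subtraction. -/
def qBinom (q : R) : ℕ → ℕ → R
  | 0, _ => 1
  | _ + 1, 0 => 1
  | i + 1, j + 1 => qBinom q i (j + 1) + q ^ (i + 1) * qBinom q (i + 1) j

@[simp] lemma qBinom_zero_left (q : R) (j : ℕ) : qBinom q 0 j = 1 := by
  rw [qBinom]

@[simp] lemma qBinom_zero_right (q : R) (i : ℕ) : qBinom q i 0 = 1 := by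
  cases i <;> rw [qBinom]

lemma qBinom_succ_succ (q : R) (i j : ℕ) :
    qBinom q (i + 1) (j + 1) = qBinom q i (j + 1) + q ^ (i + 1) * qBinom q (i + 1) j := by
  rw [qBinom]

lemma map_qBinom {S F : Type*} [CommRing S] [FunLike F R S] [RingHomClass F R S] (f : F)
    (q : R) (i j : ℕ) : f (qBinom q i j) = qBinom (f q) i j := by
  induction i generalizing j with
  | zero => simp
  | succ i ihi =>
    induction j with
    | zero => simp
    | succ j ihj => simp [qBinom_succ_succ, ihi, ihj]

lemma choose_two_succ (n : ℕ) : (n + 1).choose 2 = n.choose 2 + n := by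
  rw [Nat.choose_succ_succ', Nat.choose_one_right, add_comm]

theorem prod_add_mul_pow_eq_sum_qBinom (q x y : R) (M : ℕ) :
    ∏ m ∈ range M, (x + y * q ^ m) =
      ∑ p ∈ antidiagonal M, qBinom q p.1 p.2 * q ^ p.2.choose 2 * x ^ p.1 * y ^ p.2 := by
  induction M with
  | zero => simp
  | succ M ih =>
    set h : ℕ × ℕ → R := fun p => qBinom q p.1 p.2 * q ^ p.2.choose 2 * x ^ p.1 * y ^ p.2
    let fromX : ℕ × ℕ → R
      | (0, _) => 0
      | (i + 1, j) => x * h (i, j)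
    let fromY : ℕ × ℕ → R
      | (_, 0) => 0
      | (i, j + 1) => y * q ^ M * h (i, j)
    have split : ∀ p ∈ antidiagonal (M + 1), h p = fromX p + fromY p := by
      rintro ⟨_ | i, _ | j⟩ hp <;> simp only [HasAntidiagonal.mem_antidiagonal] at hp
      · omega
      · obtain rfl : M = j := by omega
        simp only [h, fromX, fromY, qBinom_zero_left, choose_two_succ]
        ring
      · simp only [h, fromX, fromY, qBinom_zero_right]
        ring
      · obtain rfl : M = i + 1 + j := by omega
        simp only [h, fromX, fromY, qBinom_succ_succ, choose_two_succ]
        ring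
    rw [sum_congr rfl split, sum_add_distrib, Nat.sum_antidiagonal_succ,
      Nat.sum_antidiagonal_succ', prod_range_succ, ih, mul_comm, add_mul, mul_sum, mul_sum]
    simp only [fromX, fromY, h, zero_add]

/-- `(q;q)_m`. -/
def qPochhammer (q : R) (m : ℕ) : R := ∏ k ∈ range m, (1 - q ^ (k + 1))

lemma qPochhammer_succ (q : R) (m : ℕ) :
    qPochhammer q (m + 1) = qPochhammer q m * (1 - q ^ (m + 1)) :=
  prod_range_succ _ _

theorem qBinom_mul_qPochhammer (q : R) (i j : ℕ) :
    qBinom q i j * qPochhammer q i * qPochhammer q j = qPochhammer q (i + j) := by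
  induction i generalizing j with
  | zero => simp [qPochhammer]
  | succ i ihi =>
    induction j with
    | zero => simp [qPochhammer]
    | succ j ihj =>
      have hi := ihi (j + 1)
      rw [qPochhammer_succ q j, ← add_assoc] at hi
      rw [qPochhammer_succ q i, show i + 1 + j = i + j + 1 by ring] at ihj
      rw [qBinom_succ_succ, show i + 1 + (j + 1) = i + j + 1 + 1 by ring,
        qPochhammer_succ _ (i + j + 1), qPochhammer_succ q i, qPochhammer_succ q j]
      linear_combination (1 - q ^ (i + 1)) * hi + q ^ (i + 1) * (1 - q ^ (j + 1)) * ihj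

lemma two_mul_choose_two (n : ℕ) : 2 * (n.choose 2 : ℤ) = n * (n - 1) := by
  induction n with
  | zero => simp
  | succ n ih => rw [choose_two_succ]; push_cast; linear_combination ih

lemma two_mul_toNat_triangle (n : ℤ) : 2 * ((n * (n + 1) / 2).toNat : ℤ) = n * (n + 1) := by
  have hnonneg : 0 ≤ n * (n + 1) / 2 := by
    refine Int.ediv_nonneg ?_ zero_le_two
    rcases le_or_gt 0 n with hn | hn
    · exact mul_nonneg hn (by omega)
    · exact mul_nonneg_of_nonpos_of_nonpos hn.le (by omega)
  rw [Int.toNat_of_nonneg hnonneg, Int.mul_ediv_cancel' (Int.even_mul_succ_self n).two_dvd]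

lemma two_mul_toNat_triangle_sub_one (n : ℤ) :
    2 * ((n * (n - 1) / 2).toNat : ℤ) = n * (n - 1) := by
  simpa only [sub_add_cancel, mul_comm (n - 1)] using two_mul_toNat_triangle (n - 1)

def thetaTerm (a b : R) (n : ℤ) : R := a ^ (n * (n + 1) / 2).toNat * b ^ (n * (n - 1) / 2).toNat

lemma thetaTerm_neg (a b : R) (n : ℤ) : thetaTerm a b (-n) = thetaTerm b a n := by
  rw [thetaTerm, thetaTerm, mul_comm, show -n - 1 = -(n + 1) by ring,
    show -n + 1 = -(n - 1) by ring, neg_mul_neg, neg_mul_neg]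

lemma thetaTerm_natCast (a b : R) (m : ℕ) : thetaTerm a b m = a ^ m * (a * b) ^ m.choose 2 := by
  have ha := two_mul_toNat_triangle m
  have hb := two_mul_toNat_triangle_sub_one m
  have hc := two_mul_choose_two m
  rw [thetaTerm, mul_pow, ← mul_assoc, ← pow_add]
  congr 2 <;> zify <;> linarith

lemma thetaTerm_sub (a b : R) {N i j : ℕ} (hij : i + j = 2 * N) :
    a ^ N * (a * b) ^ (N.choose 2 + N * N) * thetaTerm a b (j - N) =
      (a * b) ^ j.choose 2 * ((a * b) ^ N) ^ i * a ^ j := by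
  set s := ((j - N : ℤ) * (j - N + 1) / 2).toNat
  set t := ((j - N : ℤ) * (j - N - 1) / 2).toNat
  have hs : 2 * (s : ℤ) = (j - N) * (j - N + 1) := two_mul_toNat_triangle _
  have ht : 2 * (t : ℤ) = (j - N) * (j - N - 1) := two_mul_toNat_triangle_sub_one _
  have hj := two_mul_choose_two j
  have hN := two_mul_choose_two N
  have hi : (i : ℤ) = 2 * N - j := by omega
  have ea : N + (N.choose 2 + N * N) + s = j.choose 2 + N * i + j := by
    zify; rw [hi]; linarith
  have eb : N.choose 2 + N * N + t = j.choose 2 + N * i := by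
    zify; rw [hi]; linarith
  calc _ = a ^ (N + (N.choose 2 + N * N) + s) * b ^ (N.choose 2 + N * N + t) := by
        rw [thetaTerm]; ring
    _ = _ := by rw [ea, eb]; ring

lemma prod_pow_add_mul_pow (a b : R) (N : ℕ) :
    ∏ m ∈ range (2 * N), ((a * b) ^ N + a * (a * b) ^ m) =
      a ^ N * (a * b) ^ (N.choose 2 + N * N) *
        ((∏ k ∈ range N, (1 + a * (a * b) ^ k)) * ∏ k ∈ range N, (1 + b * (a * b) ^ k)) := by
  set q := a * b
  have lower : ∏ m ∈ range N, (q ^ N + a * q ^ m) =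
      q ^ N.choose 2 * ∏ k ∈ range N, (a * (1 + b * q ^ k)) := by
    calc ∏ m ∈ range N, (q ^ N + a * q ^ m)
        = ∏ m ∈ range N, (q ^ m * (q ^ (N - 1 - m + 1) + a)) := by
          refine prod_congr rfl fun m hm => ?_
          rw [mul_add, ← pow_add, show m + (N - 1 - m + 1) = N by grind, mul_comm]
      _ = q ^ N.choose 2 * ∏ k ∈ range N, (q ^ (k + 1) + a) := by
          rw [prod_mul_distrib, prod_pow_eq_pow_sum, sum_range_id, ← Nat.choose_two_right,
            prod_range_reflect (fun k => q ^ (k + 1) + a)]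
      _ = q ^ N.choose 2 * ∏ k ∈ range N, (a * (1 + b * q ^ k)) := by
          refine congrArg _ (prod_congr rfl fun k _ => ?_)
          simp only [q]
          ring
  have upper : ∏ k ∈ range N, (q ^ N + a * q ^ (N + k)) =
      q ^ (N * N) * ∏ k ∈ range N, (1 + a * q ^ k) := by
    rw [pow_mul, pow_eq_prod_const (q ^ N), ← prod_mul_distrib]
    exact prod_congr rfl fun k _ => by ring
  rw [two_mul, prod_range_add, lower, upper, prod_mul_distrib, prod_const, card_range]
  ring

lemma mul_finite_jacobi_triple_product (a b : R) (N : ℕ) :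
    a ^ N * (a * b) ^ (N.choose 2 + N * N) *
        ((∏ k ∈ range N, (1 + a * (a * b) ^ k)) * ∏ k ∈ range N, (1 + b * (a * b) ^ k)) =
      a ^ N * (a * b) ^ (N.choose 2 + N * N) *
        ∑ n ∈ Icc (-N : ℤ) N, qBinom (a * b) (N - n).toNat (N + n).toNat * thetaTerm a b n := by
  rw [← prod_pow_add_mul_pow, prod_add_mul_pow_eq_sum_qBinom, mul_sum]
  refine sum_nbij' (fun p => (p.2 : ℤ) - N) (fun n => ((N - n).toNat, (N + n).toNat))
    ?_ ?_ ?_ ?_ ?_ <;> simp only [HasAntidiagonal.mem_antidiagonal, mem_Icc, Prod.forall]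
  · intro i j _; omega
  · intro n _; omega
  · intro i j _; rw [Prod.mk.injEq]; omega
  · intro n _; omega
  · intro i j hij
    rw [show (N - (j - N : ℤ)).toNat = i by omega, show (N + (j - N : ℤ)).toNat = j by omega,
      mul_left_comm, thetaTerm_sub a b hij]
    ring

theorem finite_jacobi_triple_product (a b : R) (N : ℕ) :
    (∏ k ∈ range N, (1 + a * (a * b) ^ k)) * ∏ k ∈ range N, (1 + b * (a * b) ^ k) =
      ∑ n ∈ Icc (-N : ℤ) N, qBinom (a * b) (N - n).toNat (N + n).toNat * thetaTerm a b n := by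
  open MvPolynomial in
  have hX : (X 0 : MvPolynomial (Fin 2) ℤ) ^ N * (X 0 * X 1) ^ (N.choose 2 + N * N) ≠ 0 :=
    mul_ne_zero (pow_ne_zero _ (X_ne_zero _))
      (pow_ne_zero _ (mul_ne_zero (X_ne_zero _) (X_ne_zero _)))
  have := congrArg (MvPolynomial.aeval ![a, b])
    (mul_left_cancel₀ hX (mul_finite_jacobi_triple_product (X 0) (X 1) N))
  simpa [thetaTerm, map_qBinom] using this

section Analytic

open Filter Topology

variable {𝕜 : Type*} [NormedField 𝕜]

lemma one_sub_pow_succ_ne_zero {q : 𝕜} (hq : ‖q‖ < 1) (k : ℕ) : 1 - q ^ (k + 1) ≠ 0 := by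
  refine sub_ne_zero.mpr fun h => ?_
  have : ‖q‖ ^ (k + 1) < 1 := pow_lt_one₀ (norm_nonneg q) hq k.succ_ne_zero
  rw [← norm_pow, ← h, norm_one] at this
  exact lt_irrefl _ this

lemma qPochhammer_ne_zero {q : 𝕜} (hq : ‖q‖ < 1) (m : ℕ) : qPochhammer q m ≠ 0 :=
  prod_ne_zero_iff.mpr fun k _ => one_sub_pow_succ_ne_zero hq k

lemma qBinom_eq_div {q : 𝕜} (hq : ‖q‖ < 1) (i j : ℕ) :
    qBinom q i j = qPochhammer q (i + j) / (qPochhammer q i * qPochhammer q j) := by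
  rw [eq_div_iff (mul_ne_zero (qPochhammer_ne_zero hq i) (qPochhammer_ne_zero hq j)),
    ← mul_assoc, qBinom_mul_qPochhammer]

lemma norm_thetaTerm (a b : 𝕜) (n : ℤ) : ‖thetaTerm a b n‖ = thetaTerm ‖a‖ ‖b‖ n := by
  rw [thetaTerm, thetaTerm, norm_mul, norm_pow, norm_pow]

variable [CompleteSpace 𝕜]

lemma summable_pow_mul_pow_choose_two (c q : 𝕜) (hq : ‖q‖ < 1) :
    Summable fun m : ℕ => c ^ m * q ^ m.choose 2 := by
  have hsmall : Tendsto (fun m : ℕ => ‖c‖ * ‖q‖ ^ m) atTop (𝓝 0) := by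
    simpa using (tendsto_pow_atTop_nhds_zero_of_lt_one (norm_nonneg q) hq).const_mul ‖c‖
  refine summable_of_ratio_norm_eventually_le one_half_lt_one ?_
  filter_upwards [hsmall.eventually (ge_mem_nhds one_half_pos)] with m hm
  calc ‖c ^ (m + 1) * q ^ (m + 1).choose 2‖ = ‖c‖ * ‖q‖ ^ m * ‖c ^ m * q ^ m.choose 2‖ := by
        simp only [choose_two_succ, norm_mul, norm_pow]; ring
    _ ≤ 1 / 2 * ‖c ^ m * q ^ m.choose 2‖ := by gcongr

lemma summable_thetaTerm (a b : 𝕜) (h : ‖a * b‖ < 1) : Summable (thetaTerm a b) := by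
  refine Summable.of_nat_of_neg ?_ ?_
  · simpa only [thetaTerm_natCast] using summable_pow_mul_pow_choose_two a (a * b) h
  · simpa only [thetaTerm_neg, thetaTerm_natCast, mul_comm b] using
      summable_pow_mul_pow_choose_two b (a * b) h

lemma multipliable_one_add_mul_pow (c q : 𝕜) (hq : ‖q‖ < 1) :
    Multipliable fun k : ℕ => 1 + c * q ^ k := by
  refine multipliable_one_add_of_summable ?_
  simpa only [norm_mul, norm_pow] using
    (summable_geometric_of_lt_one (norm_nonneg q) hq).mul_left ‖c‖

lemma tendsto_qPochhammer {q : 𝕜} (hq : ‖q‖ < 1) :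
    Tendsto (qPochhammer q) atTop (𝓝 (∏' k : ℕ, (1 - q ^ (k + 1)))) := by
  have := (multipliable_one_add_mul_pow (-q) q hq).tendsto_prod_tprod_nat
  simp only [neg_mul, ← pow_succ', ← sub_eq_add_neg] at this
  exact this

lemma tprod_one_sub_pow_succ_ne_zero {q : 𝕜} (hq : ‖q‖ < 1) :
    ∏' k : ℕ, (1 - q ^ (k + 1)) ≠ 0 := by
  simp only [sub_eq_add_neg]
  refine tprod_one_add_ne_zero_of_summable (fun k => ?_) ?_
  · rw [← sub_eq_add_neg]; exact one_sub_pow_succ_ne_zero hq k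
  · simpa only [norm_neg, norm_mul, norm_pow, pow_succ'] using
      (summable_geometric_of_lt_one (norm_nonneg q) hq).mul_left ‖q‖

lemma exists_forall_norm_qBinom_le {q : 𝕜} (hq : ‖q‖ < 1) : ∃ C, ∀ i j, ‖qBinom q i j‖ ≤ C := by
  have hlim := tendsto_qPochhammer hq
  obtain ⟨B, hB⟩ := isBounded_iff_forall_norm_le.mp (Metric.isBounded_range_of_tendsto _ hlim)
  obtain ⟨B', hB'⟩ := isBounded_iff_forall_norm_le.mp (Metric.isBounded_range_of_tendsto _
    (hlim.inv₀ (tprod_one_sub_pow_succ_ne_zero hq)))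
  simp only [Set.forall_mem_range] at hB hB'
  refine ⟨B * (B' * B'), fun i j => ?_⟩
  rw [qBinom_eq_div hq, div_eq_mul_inv, mul_inv, norm_mul, norm_mul]
  have hB'_nonneg : 0 ≤ B' := (norm_nonneg _).trans (hB' 0)
  exact mul_le_mul (hB _) (mul_le_mul (hB' i) (hB' j) (norm_nonneg _) hB'_nonneg)
    (by positivity) ((norm_nonneg _).trans (hB 0))

lemma tendsto_qBinom {ι : Type*} {l : Filter ι} {q : 𝕜} (hq : ‖q‖ < 1) {i j : ι → ℕ}
    (hi : Tendsto i l atTop) (hj : Tendsto j l atTop) :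
    Tendsto (fun x => qBinom q (i x) (j x)) l (𝓝 (∏' k : ℕ, (1 - q ^ (k + 1)))⁻¹) := by
  have hlim := tendsto_qPochhammer hq
  have hP := tprod_one_sub_pow_succ_ne_zero hq
  rw [← div_mul_cancel_right₀ hP]
  simp only [qBinom_eq_div hq]
  exact (hlim.comp (hi.atTop_add_atTop hj)).div ((hlim.comp hi).mul (hlim.comp hj))
    (mul_ne_zero hP hP)

theorem jacobi_triple_product (a b : 𝕜) (h : ‖a * b‖ < 1) :
    ∑' n : ℤ, thetaTerm a b n =
      (∏' k : ℕ, (1 + a * (a * b) ^ k)) * (∏' k : ℕ, (1 + b * (a * b) ^ k)) *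
        ∏' k : ℕ, (1 - (a * b) ^ (k + 1)) := by
  set q := a * b
  set P := ∏' k : ℕ, (1 - q ^ (k + 1))
  obtain ⟨C, hC⟩ := exists_forall_norm_qBinom_le h
  let F : ℕ → ℤ → 𝕜 := fun N n =>
    if n ∈ Icc (-N : ℤ) N then qBinom q (N - n).toNat (N + n).toNat * thetaTerm a b n else 0
  have hF : ∀ N, ∑' n, F N n =
      (∏ k ∈ range N, (1 + a * q ^ k)) * ∏ k ∈ range N, (1 + b * q ^ k) := fun N => by
    rw [tsum_eq_sum fun n hn => if_neg hn, finite_jacobi_triple_product]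
    exact sum_congr rfl fun n hn => if_pos hn
  have hF_lim : Tendsto (fun N => ∑' n, F N n) atTop (𝓝 (∑' n, P⁻¹ * thetaTerm a b n)) := by
    have hnorm : ‖‖a‖ * ‖b‖‖ < 1 := by rwa [norm_mul, norm_norm, norm_norm, ← norm_mul]
    refine tendsto_tsum_of_dominated_convergence ((summable_thetaTerm _ _ hnorm).mul_left C)
      (fun n => ?_) (Eventually.of_forall fun N n => ?_)
    · have hidx : ∀ m : ℤ, Tendsto (fun N : ℕ => (N + m).toNat) atTop atTop := fun m =>
        tendsto_atTop_atTop.mpr fun k => ⟨k + m.natAbs, fun N hN => by omega⟩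
      refine ((tendsto_qBinom h (by simpa [sub_eq_add_neg] using hidx (-n)) (hidx n)).mul_const
        (thetaTerm a b n)).congr' ?_
      filter_upwards [eventually_ge_atTop n.natAbs] with N hN
      exact (if_pos (mem_Icc.mpr ⟨by omega, by omega⟩)).symm
    · dsimp only [F]
      split_ifs
      · rw [norm_mul, ← norm_thetaTerm]; gcongr; exact hC _ _
      · rw [norm_zero, ← norm_thetaTerm]
        exact mul_nonneg ((norm_nonneg _).trans (hC 0 0)) (norm_nonneg _)
  have hprod_lim := ((multipliable_one_add_mul_pow a q h).tendsto_prod_tprod_nat.mul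
    (multipliable_one_add_mul_pow b q h).tendsto_prod_tprod_nat)
  simp only [hF] at hF_lim
  rw [tendsto_nhds_unique hprod_lim hF_lim, tsum_mul_left, mul_comm,
    mul_inv_cancel_left₀ (tprod_one_sub_pow_succ_ne_zero h)]

end Analytic
end JacobiTripleProduct

theorem stmt1 (a b : ℂ) (h : ‖a * b‖ < 1) :
    ∑' n : ℤ, a ^ (n * (n + 1) / 2).toNat * b ^ (n * (n - 1) / 2).toNat =
      (∏' k : ℕ, (1 + a * (a * b) ^ k)) * (∏' k : ℕ, (1 + b * (a * b) ^ k)) *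
        ∏' k : ℕ, (1 - (a * b) ^ (k + 1)) :=
  JacobiTripleProduct.jacobi_triple_product a b h
end

section
/- As formal power series, φ(-q) := ∑_{n=-∞}^∞ (-1)^n q^(n^2) equals f_1^2 / f_2, i.e., ∑_{n∈ℤ} (-1)^n q^(n^2) = ∏_{k≥1} (1-q^k)^2 / ∏_{k≥1} (1-q^(2k)); equivalently (∑_{n∈ℤ} (-1)^n q^(n^2)) · ∏_{k≥1}(1-q^(2k)) = ∏_{k≥1}(1-q^k)^2. -/
open PowerSeries Finset Filter

-- `phi t` is the theta series φ(-q^t) = ∑_{n∈ℤ} (-1)^n q^(t·n²) = 1 + 2∑_{n≥1} (-1)^n q^(t·n²).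
open scoped Classical in
noncomputable def phi (t : ℕ) : PowerSeries ℤ :=
  PowerSeries.mk fun n =>
    if n = 0 then 1
    else if (∃ m : ℕ, t * m ^ 2 = n) then 2 * (-1) ^ Nat.sqrt (n / t) else 0

/-!
The identity is read off from the finite form of the Jacobi triple product,
`∑_{m ≤ 2N} z^m x^((m-N)²) [2N, m]_{x²} = ∏_{j < N} (1 + z x^(2j+1)) (z + x^(2j+1))`,
proved by induction on `N` from a three-term recurrence of the Gaussian binomials.
At `z = -1` the right side is `(-1)^N (x; x²)_N²`. Since
`[2N, m]_{x²} (x²; x²)_N ≡ 1` modulo `x^(2N+1-(m-N)²)`, multiplying by `(x²; x²)_N` turns the left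
side into `(-1)^N φ(-x)` modulo `x^(2N+1)`, so `φ(-x) ≡ (x; x²)_N² (x²; x²)_N`. As
`(x; x²)_N (x²; x²)_N = (x; x)_(2N)`, comparing coefficients of `x^n` with `N = n` gives the
identity.
-/

section GaussBinom

variable {R : Type*} [CommRing R] (q : R)

def gaussBinom : ℕ → ℕ → R
  | _, 0 => 1
  | 0, _ + 1 => 0
  | n + 1, m + 1 => q ^ (m + 1) * gaussBinom n (m + 1) + gaussBinom n m

@[simp]
lemma gaussBinom_zero_right (n : ℕ) : gaussBinom q n 0 = 1 := by
  cases n <;> rfl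

@[simp]
lemma gaussBinom_zero_succ (m : ℕ) : gaussBinom q 0 (m + 1) = 0 := rfl

lemma gaussBinom_succ_succ (n m : ℕ) :
    gaussBinom q (n + 1) (m + 1) = q ^ (m + 1) * gaussBinom q n (m + 1) + gaussBinom q n m :=
  rfl

lemma gaussBinom_eq_zero_of_lt {n m : ℕ} (h : n < m) : gaussBinom q n m = 0 := by
  induction n generalizing m with
  | zero => obtain ⟨m, rfl⟩ := Nat.exists_eq_succ_of_ne_zero h.ne'; rfl
  | succ n ih =>
    obtain ⟨m, rfl⟩ := Nat.exists_eq_succ_of_ne_zero (Nat.ne_zero_of_lt h)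
    rw [gaussBinom_succ_succ, ih (by omega), ih (by omega), mul_zero, add_zero]

@[simp]
lemma gaussBinom_self (n : ℕ) : gaussBinom q n n = 1 := by
  induction n with
  | zero => rfl
  | succ n ih =>
    rw [gaussBinom_succ_succ, gaussBinom_eq_zero_of_lt q (by omega), ih, mul_zero, zero_add]

lemma gaussBinom_succ_one (n : ℕ) : gaussBinom q (n + 1) 1 = gaussBinom q n 1 + q ^ n := by
  induction n with
  | zero => simp
  | succ n ih =>
    have h₁ := gaussBinom_succ_succ q (n + 1) 0
    have h₂ := gaussBinom_succ_succ q n 0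
    simp only [zero_add, pow_one, gaussBinom_zero_right] at h₁ h₂
    linear_combination h₁ + q * ih - h₂

lemma gaussBinom_add_succ_succ (a b : ℕ) :
    gaussBinom q (a + b + 1) (a + 1) =
      gaussBinom q (a + b) (a + 1) + q ^ b * gaussBinom q (a + b) a := by
  induction a generalizing b with
  | zero => simpa using gaussBinom_succ_one q b
  | succ a iha =>
    induction b with
    | zero => simp [gaussBinom_eq_zero_of_lt q (Nat.lt_succ_self (a + 1))]
    | succ b ihb =>
      have h₁ := iha (b + 1)
      have h₂ := gaussBinom_succ_succ q (a + b + 2) (a + 1)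
      have h₃ := gaussBinom_succ_succ q (a + b + 1) (a + 1)
      have h₄ := gaussBinom_succ_succ q (a + b + 1) a
      simp only [show a + 1 + (b + 1) = a + b + 2 by omega,
        show a + 1 + b = a + b + 1 by omega, show a + (b + 1) = a + b + 1 by omega] at *
      linear_combination h₂ + q ^ (a + 2) * ihb + h₁ - h₃ - q ^ (b + 1) * h₄

lemma gaussBinom_add_symm (a b : ℕ) : gaussBinom q (a + b) b = gaussBinom q (a + b) a := by
  induction a generalizing b with
  | zero => simp
  | succ a iha =>
    induction b with
    | zero => simp
    | succ b ihb =>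
      have h₁ := iha (b + 1)
      have h₂ := gaussBinom_succ_succ q (a + b + 1) b
      have h₃ := gaussBinom_add_succ_succ q a (b + 1)
      simp only [show a + 1 + (b + 1) = a + b + 2 by omega, show a + 1 + b = a + b + 1 by omega,
        show a + (b + 1) = a + b + 1 by omega] at *
      linear_combination h₂ + q ^ (b + 1) * h₁ + ihb - h₃

lemma gaussBinom_add_mul_prod (a b : ℕ) :
    gaussBinom q (a + b) a * ∏ j ∈ Ioc 0 b, (1 - q ^ j) = ∏ j ∈ Ioc a (a + b), (1 - q ^ j) := by
  induction a generalizing b with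
  | zero => simp
  | succ a iha =>
    induction b with
    | zero => simp
    | succ b ihb =>
      have h₁ := iha (b + 1)
      have h₂ := gaussBinom_succ_succ q (a + b + 1) a
      have h₃ := prod_Ioc_succ_top (Nat.zero_le b) fun j => 1 - q ^ j
      have h₄ := prod_Ioc_succ_top (show a + 1 ≤ a + b + 1 by omega) fun j => 1 - q ^ j
      rw [← prod_Ioc_consecutive _ (Nat.le_succ a) (by omega), Nat.Ioc_succ_singleton,
        prod_singleton, h₃] at h₁
      simp only [show a + 1 + (b + 1) = a + b + 2 by omega, show a + 1 + b = a + b + 1 by omega,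
        show a + (b + 1) = a + b + 1 by omega] at *
      rw [h₂, h₃, h₄]
      linear_combination (1 - q ^ (b + 1)) * q ^ (a + 1) * ihb + h₁

lemma gaussBinom_add_two {n m : ℕ} (h : m ≤ n) :
    gaussBinom q (n + 2) (m + 2) = q ^ (m + 2) * gaussBinom q n (m + 2)
      + (1 + q ^ (n + 1)) * gaussBinom q n (m + 1) + q ^ (n - m) * gaussBinom q n m := by
  obtain ⟨k, rfl⟩ := Nat.exists_eq_add_of_le h
  have h₁ := gaussBinom_add_succ_succ q (m + 1) k
  have h₂ := gaussBinom_succ_succ q (m + k) (m + 1)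
  have h₃ := gaussBinom_succ_succ q (m + k) m
  simp only [show m + 1 + k = m + k + 1 by omega, Nat.add_sub_cancel_left] at *
  linear_combination h₁ + h₂ + q ^ k * h₃

lemma prod_one_sub_pow_sModEq_one {s : Finset ℕ} {k : ℕ} (h : ∀ j ∈ s, k ≤ j) :
    ∏ j ∈ s, (1 - q ^ j) ≡ 1 [SMOD Ideal.span {q ^ k}] := by
  simpa using SModEq.prod (y := fun _ ↦ (1 : R)) fun j hj ↦ by
    rw [SModEq.sub_mem, sub_sub_cancel_left, neg_mem_iff, Ideal.mem_span_singleton]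
    exact pow_dvd_pow q (h j hj)

lemma gaussBinom_mul_prod_sModEq_one {n m N : ℕ} (hmN : m ≤ N) (hmn : 2 * m ≤ n) :
    gaussBinom q n m * ∏ j ∈ Ioc 0 N, (1 - q ^ j) ≡ 1 [SMOD Ideal.span {q ^ (m + 1)}] := by
  obtain ⟨k, rfl⟩ : ∃ k, n = k + m := ⟨n - m, by omega⟩
  rw [← prod_Ioc_consecutive _ (Nat.zero_le m) hmN, ← mul_assoc, gaussBinom_add_symm,
    gaussBinom_add_mul_prod]
  simpa using (prod_one_sub_pow_sModEq_one q fun j hj ↦ by have := (mem_Ioc.mp hj).1; omega).mul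
    (prod_one_sub_pow_sModEq_one q fun j hj ↦ (mem_Ioc.mp hj).1)

end GaussBinom

section JacobiTripleProduct

variable {R : Type*} [CommRing R]

def jacobiTerm (x z : R) (N m : ℕ) : R :=
  z ^ m * x ^ ((m - N : ℤ).natAbs ^ 2) * gaussBinom (x ^ 2) (2 * N) m

lemma jacobiTerm_eq_zero_of_lt (x z : R) {N m : ℕ} (h : 2 * N < m) : jacobiTerm x z N m = 0 := by
  simp [jacobiTerm, gaussBinom_eq_zero_of_lt _ h]

lemma jacobiTerm_succ_zero (x z : R) (N : ℕ) :
    jacobiTerm x z (N + 1) 0 = x ^ (2 * N + 1) * jacobiTerm x z N 0 := by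
  simp only [jacobiTerm, pow_zero, one_mul, gaussBinom_zero_right, mul_one, ← pow_add]
  congr 1
  zify; simp only [sq_abs]; ring

lemma jacobiTerm_succ_one (x z : R) (N : ℕ) :
    jacobiTerm x z (N + 1) 1 = x ^ (2 * N + 1) * jacobiTerm x z N 1
      + z * (1 + (x ^ (2 * N + 1)) ^ 2) * jacobiTerm x z N 0 := by
  have hG := gaussBinom_succ_one (x ^ 2) (2 * N + 1)
  have hG' := gaussBinom_succ_succ (x ^ 2) (2 * N) 0
  simp only [zero_add, pow_one, gaussBinom_zero_right] at hG'
  have e₁ : x ^ (2 * N + 1) * x ^ (((1 : ℕ) - N : ℤ).natAbs ^ 2)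
      = x ^ (((0 : ℕ) - N : ℤ).natAbs ^ 2) * x ^ 2 := by
    rw [← pow_add, ← pow_add]; congr 1; zify; simp only [sq_abs]; ring
  have e₂ : (((1 : ℕ) - (N + 1 : ℕ) : ℤ)).natAbs = (((0 : ℕ) - N : ℤ)).natAbs := by
    push_cast; ring_nf
  simp only [jacobiTerm, show 2 * (N + 1) = 2 * N + 1 + 1 by ring, e₂, hG, hG',
    gaussBinom_zero_right]
  linear_combination (-z * gaussBinom (x ^ 2) (2 * N) 1) * e₁

lemma jacobiTerm_succ_add_two (x z : R) {N m : ℕ} (hm : m ≤ 2 * N) :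
    jacobiTerm x z (N + 1) (m + 2) =
      x ^ (2 * N + 1) * (jacobiTerm x z N (m + 2) + z ^ 2 * jacobiTerm x z N m)
        + z * (1 + (x ^ (2 * N + 1)) ^ 2) * jacobiTerm x z N (m + 1) := by
  have e₁ : ((m + 2 : ℕ) - (N + 1 : ℕ) : ℤ).natAbs = ((m + 1 : ℕ) - N : ℤ).natAbs := by
    push_cast; ring_nf
  have e₂ : x ^ (((m + 1 : ℕ) - N : ℤ).natAbs ^ 2) * (x ^ 2) ^ (m + 2)
      = x ^ (2 * N + 1) * x ^ (((m + 2 : ℕ) - N : ℤ).natAbs ^ 2) := by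
    rw [← pow_mul, ← pow_add, ← pow_add]; congr 1; zify; simp only [sq_abs]; ring
  have e₃ : x ^ (((m + 1 : ℕ) - N : ℤ).natAbs ^ 2) * (x ^ 2) ^ (2 * N - m)
      = x ^ (2 * N + 1) * x ^ ((m - N : ℤ).natAbs ^ 2) := by
    rw [← pow_mul, ← pow_add, ← pow_add]; congr 1; zify [hm]; simp only [sq_abs]; ring
  simp only [jacobiTerm, show 2 * (N + 1) = 2 * N + 2 by ring, gaussBinom_add_two _ hm, e₁]
  linear_combination (z ^ (m + 2) * gaussBinom (x ^ 2) (2 * N) (m + 2)) * e₂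
    + (z ^ (m + 2) * gaussBinom (x ^ 2) (2 * N) m) * e₃

theorem finite_jacobi_triple_product (x z : R) (N : ℕ) :
    ∑ m ∈ range (2 * N + 1), jacobiTerm x z N m =
      ∏ j ∈ range N, (1 + z * x ^ (2 * j + 1)) * (z + x ^ (2 * j + 1)) := by
  induction N with
  | zero => simp [jacobiTerm]
  | succ N ih =>
    set t := jacobiTerm x z N
    have hzero : t (2 * N + 1) = 0 := jacobiTerm_eq_zero_of_lt x z (by omega)
    have htwo : t (2 * N + 2) = 0 := jacobiTerm_eq_zero_of_lt x z (by omega)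
    have hshift₁ : ∑ m ∈ range (2 * N + 1), t (m + 1) = ∑ m ∈ range (2 * N + 1), t m - t 0 := by
      have := sum_range_succ' t (2 * N + 1)
      rw [sum_range_succ, hzero] at this
      linear_combination -this
    have hshift₂ : ∑ m ∈ range (2 * N + 1), t (m + 2)
        = ∑ m ∈ range (2 * N + 1), t m - t 0 - t 1 := by
      have := sum_range_succ' (fun m ↦ t (m + 1)) (2 * N + 1)
      rw [sum_range_succ, htwo, hshift₁] at this
      linear_combination -this
    rw [show 2 * (N + 1) + 1 = 2 * N + 1 + 1 + 1 by ring, sum_range_succ', sum_range_succ',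
      sum_congr rfl fun m hm ↦ jacobiTerm_succ_add_two x z (by simp at hm; omega),
      sum_add_distrib, ← mul_sum, sum_add_distrib, ← mul_sum, ← mul_sum, hshift₁, hshift₂,
      jacobiTerm_succ_zero, jacobiTerm_succ_one, prod_range_succ, ← ih]
    ring

end JacobiTripleProduct

section Truncation

variable {R : Type*} [CommRing R]

lemma pow_mul_sModEq_pow {x a : R} {k l e : ℕ} (ha : a ≡ 1 [SMOD Ideal.span {x ^ k}])
    (hl : l ≤ e + k) : x ^ e * a ≡ x ^ e [SMOD Ideal.span {x ^ l}] := by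
  rw [SModEq.sub_mem, Ideal.mem_span_singleton] at ha ⊢
  obtain ⟨c, hc⟩ := ha
  exact ⟨x ^ (e + k - l) * c, by
    rw [← mul_sub_one, hc, ← mul_assoc, ← mul_assoc, ← pow_add, ← pow_add]; congr 2; omega⟩

lemma pow_sq_mul_gaussBinom_mul_prod_sModEq (x : R) {N m : ℕ} (hm : m ≤ 2 * N) :
    x ^ ((m - N : ℤ).natAbs ^ 2) * (gaussBinom (x ^ 2) (2 * N) m * ∏ j ∈ Ioc 0 N, (1 - (x ^ 2) ^ j))
      ≡ x ^ ((m - N : ℤ).natAbs ^ 2) [SMOD Ideal.span {x ^ (2 * N + 1)}] := by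
  rcases le_total m N with h | h
  · have := gaussBinom_mul_prod_sModEq_one (x ^ 2) h (by omega : 2 * m ≤ 2 * N)
    rw [← pow_mul] at this
    refine pow_mul_sModEq_pow this ?_
    zify; simp only [sq_abs]; nlinarith [sq_nonneg ((m : ℤ) - N + 1)]
  · have hs := gaussBinom_add_symm (x ^ 2) (2 * N - m) m
    rw [Nat.sub_add_cancel hm] at hs
    have := gaussBinom_mul_prod_sModEq_one (x ^ 2) (by omega : 2 * N - m ≤ N)
      (by omega : 2 * (2 * N - m) ≤ 2 * N)
    rw [← hs, ← pow_mul] at this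
    refine pow_mul_sModEq_pow this ?_
    zify [hm]; simp only [sq_abs]; nlinarith [sq_nonneg ((m : ℤ) - N - 1)]

lemma sum_range_neg_one_pow_mul_pow_sq (x : R) (N : ℕ) :
    ∑ m ∈ range (2 * N + 1), (-1) ^ m * x ^ ((m - N : ℤ).natAbs ^ 2) =
      (-1) ^ N * (1 + 2 * ∑ k ∈ Icc 1 N, (-1) ^ k * x ^ (k ^ 2)) := by
  induction N with
  | zero => simp
  | succ N ih =>
    have hend : (((2 * N + 1 + 1 : ℕ) - (N + 1 : ℕ) : ℤ)).natAbs = N + 1 := by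
      push_cast; ring_nf; omega
    have hzero : (((0 : ℕ) - (N + 1 : ℕ) : ℤ)).natAbs = N + 1 := by
      push_cast; ring_nf; omega
    have hsign : ((-1 : R) ^ N) ^ 2 = 1 := by rw [← pow_mul, pow_mul']; simp
    have hshift : ∑ m ∈ range (2 * N + 1),
        (-1) ^ (m + 1) * x ^ (((m + 1 : ℕ) - (N + 1 : ℕ) : ℤ).natAbs ^ 2)
        = -∑ m ∈ range (2 * N + 1), (-1) ^ m * x ^ ((m - N : ℤ).natAbs ^ 2) := by
      rw [← sum_neg_distrib]
      refine sum_congr rfl fun m _ ↦ ?_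
      rw [show ((m + 1 : ℕ) - (N + 1 : ℕ) : ℤ) = m - N by push_cast; ring, pow_succ]
      ring
    rw [show 2 * (N + 1) + 1 = 2 * N + 1 + 1 + 1 by ring, sum_range_succ, sum_range_succ', hshift,
      ih, hzero, hend, sum_Icc_succ_top (show 1 ≤ N + 1 by omega)]
    linear_combination (-x ^ ((N + 1) ^ 2)) * hsign

lemma gauss_theta_identity_sModEq (x : R) (N : ℕ) :
    (∏ j ∈ range N, (1 - x ^ (2 * j + 1))) ^ 2 * ∏ j ∈ Ioc 0 N, (1 - (x ^ 2) ^ j)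
      ≡ 1 + 2 * ∑ k ∈ Icc 1 N, (-1) ^ k * x ^ (k ^ 2) [SMOD Ideal.span {x ^ (2 * N + 1)}] := by
  have hsign : (-1 : R) ^ N * (-1) ^ N = 1 := by rw [← pow_add, ← two_mul, pow_mul]; simp
  have hprod : ∏ j ∈ range N, (1 + -1 * x ^ (2 * j + 1)) * (-1 + x ^ (2 * j + 1))
      = (-1) ^ N * (∏ j ∈ range N, (1 - x ^ (2 * j + 1))) ^ 2 := by
    have := prod_neg (s := range N) fun j ↦ (1 - x ^ (2 * j + 1)) * (1 - x ^ (2 * j + 1))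
    rw [card_range] at this
    rw [sq, ← prod_mul_distrib, ← this]
    exact prod_congr rfl fun j _ ↦ by ring
  have hterms : ∑ m ∈ range (2 * N + 1), jacobiTerm x (-1) N m * ∏ j ∈ Ioc 0 N, (1 - (x ^ 2) ^ j)
      ≡ ∑ m ∈ range (2 * N + 1), (-1) ^ m * x ^ ((m - N : ℤ).natAbs ^ 2)
        [SMOD Ideal.span {x ^ (2 * N + 1)}] := SModEq.sum fun m hm ↦ by
    rw [jacobiTerm, mul_assoc, mul_assoc]
    exact SModEq.rfl.mul (pow_sq_mul_gaussBinom_mul_prod_sModEq x (by simp at hm; omega))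
  rw [← sum_mul, finite_jacobi_triple_product, hprod, sum_range_neg_one_pow_mul_pow_sq] at hterms
  calc _ = (-1) ^ N * ((-1) ^ N * (∏ j ∈ range N, (1 - x ^ (2 * j + 1))) ^ 2
          * ∏ j ∈ Ioc 0 N, (1 - (x ^ 2) ^ j)) := by
          linear_combination (-((∏ j ∈ range N, (1 - x ^ (2 * j + 1))) ^ 2
            * ∏ j ∈ Ioc 0 N, (1 - (x ^ 2) ^ j))) * hsign
    _ ≡ (-1) ^ N * ((-1) ^ N * (1 + 2 * ∑ k ∈ Icc 1 N, (-1) ^ k * x ^ (k ^ 2)))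
        [SMOD Ideal.span {x ^ (2 * N + 1)}] := SModEq.rfl.mul hterms
    _ = _ := by linear_combination (1 + 2 * ∑ k ∈ Icc 1 N, (-1) ^ k * x ^ (k ^ 2)) * hsign

lemma prod_Ioc_two_mul_one_sub_pow (x : R) (N : ℕ) :
    ∏ j ∈ Ioc 0 (2 * N), (1 - x ^ j)
      = (∏ j ∈ Ioc 0 N, (1 - (x ^ 2) ^ j)) * ∏ j ∈ range N, (1 - x ^ (2 * j + 1)) := by
  induction N with
  | zero => simp
  | succ N ih =>
    rw [show 2 * (N + 1) = 2 * N + 1 + 1 by ring, prod_Ioc_succ_top (Nat.zero_le (2 * N + 1)),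
      prod_Ioc_succ_top (Nat.zero_le (2 * N)), ih, prod_Ioc_succ_top (Nat.zero_le N),
      prod_range_succ]
    ring

end Truncation

lemma sModEq_span_X_pow_iff {R : Type*} [CommRing R] {a b : R⟦X⟧} {n : ℕ} :
    a ≡ b [SMOD Ideal.span {(X : R⟦X⟧) ^ n}] ↔ ∀ d < n, coeff d a = coeff d b := by
  simp only [SModEq.sub_mem, Ideal.mem_span_singleton, X_pow_dvd_iff, map_sub, sub_eq_zero]

lemma f_sModEq {k n N : ℕ} (hk : 0 < k) (hnN : n ≤ N) :
    f k ≡ ∏ j ∈ Ioc 0 N, (1 - (X ^ k) ^ j) [SMOD Ideal.span {(X : ℤ⟦X⟧) ^ (n + 1)}] := by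
  refine sModEq_span_X_pow_iff.2 fun d hd ↦ ?_
  have htail : ∏ j ∈ Ioc 0 N, (1 - (X ^ k : ℤ⟦X⟧) ^ j)
      ≡ ∏ j ∈ Ioc 0 d, (1 - (X ^ k) ^ j) [SMOD Ideal.span {(X : ℤ⟦X⟧) ^ (d + 1)}] := by
    rw [← prod_Ioc_consecutive _ (Nat.zero_le d) (by omega : d ≤ N)]
    have hle : Ideal.span {(X ^ k : ℤ⟦X⟧) ^ (d + 1)} ≤ Ideal.span {X ^ (d + 1)} :=
      Ideal.span_singleton_le_span_singleton.2 (pow_dvd_pow_of_dvd (dvd_pow_self X hk.ne') _)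
    simpa using SModEq.rfl.mul
      ((prod_one_sub_pow_sModEq_one (X ^ k) fun j hj ↦ (mem_Ioc.1 hj).1).mono hle)
  rw [sModEq_span_X_pow_iff.1 htail d (lt_add_one d), f, coeff_mk]
  congr 1
  exact prod_congr (by ext; simp; omega) fun j _ ↦ by rw [pow_mul]

lemma phi_one_sModEq (N : ℕ) :
    phi 1 ≡ 1 + 2 * ∑ k ∈ Icc 1 N, (-1) ^ k * X ^ (k ^ 2)
      [SMOD Ideal.span {(X : ℤ⟦X⟧) ^ (N + 1)}] := by
  refine sModEq_span_X_pow_iff.2 fun d hd ↦ (?_ : _ = _).symm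
  have hterm (k : ℕ) : coeff d ((2 : ℤ⟦X⟧) * ((-1) ^ k * X ^ (k ^ 2))) =
      if d = k ^ 2 then 2 * (-1) ^ k else 0 := by
    rw [← coeff_C_mul_X_pow, ← mul_assoc]; simp
  simp only [phi, coeff_mk, map_add, coeff_one, mul_sum, map_sum, hterm, one_mul, Nat.div_one]
  split_ifs with h₀ hsq
  · subst h₀
    refine (add_eq_left.2 (sum_eq_zero fun k hk ↦ if_neg ?_))
    have := (mem_Icc.1 hk).1
    positivity
  · obtain ⟨m, rfl⟩ := hsq
    have hm : m ∈ Icc 1 N := mem_Icc.2 ⟨Nat.pos_of_ne_zero (by rintro rfl; simp at h₀),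
      (Nat.le_self_pow two_ne_zero m).trans (Nat.lt_succ_iff.1 hd)⟩
    simp [Nat.sqrt_eq', hm]
  · exact (zero_add _).trans (sum_eq_zero fun k _ ↦ if_neg fun h ↦ hsq ⟨k, h.symm⟩)

theorem stmt2 : phi 1 * f 2 = f 1 ^ 2 := by
  ext n
  have hf₁ := f_sModEq one_pos (by omega : n ≤ 2 * n)
  rw [pow_one, prod_Ioc_two_mul_one_sub_pow] at hf₁
  have hgauss := (gauss_theta_identity_sModEq (X : ℤ⟦X⟧) n).mono
    (Ideal.span_singleton_le_span_singleton.2 (pow_dvd_pow X (by omega : n + 1 ≤ 2 * n + 1)))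
  refine sModEq_span_X_pow_iff.1 ?_ n (lt_add_one n)
  set B := ∏ j ∈ Ioc 0 n, (1 - (X ^ 2 : ℤ⟦X⟧) ^ j)
  set C := ∏ j ∈ range n, (1 - (X : ℤ⟦X⟧) ^ (2 * j + 1))
  set I := Ideal.span {(X : ℤ⟦X⟧) ^ (n + 1)}
  calc phi 1 * f 2 ≡ (1 + 2 * ∑ k ∈ Icc 1 n, (-1) ^ k * X ^ (k ^ 2)) * B [SMOD I] :=
        (phi_one_sModEq n).mul (f_sModEq two_pos le_rfl)
    _ ≡ C ^ 2 * B * B [SMOD I] := hgauss.symm.mul SModEq.rfl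
    _ = (B * C) ^ 2 := by ring
    _ ≡ f 1 ^ 2 [SMOD I] := hf₁.symm.pow 2
end

section
/- Euler's pentagonal number theorem in Ramanujan's notation: ∑_{n=-∞}^∞ (-1)^n q^(n(3n-1)/2) = ∏_{k=1}^∞ (1-q^k), as formal power series over ℤ. -/
/-! Both sides are compared with Mathlib's `PowerSeries.pentagonalSeries`, for which the pentagonal
number theorem is already known. The coefficient of `X ^ n` in `∏ j < M, (1 - X ^ (j + 1))` no
longer changes once `M ≥ n`, and in the finite sum only the unique `k` with `pentagonal k = N`
contributes; it lies in the summation range because `|k| ≤ pentagonal k`. -/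

open PowerSeries Finset Filter

theorem natAbs_le_pentagonal (k : ℤ) : k.natAbs ≤ pentagonal k := by
  have h := two_mul_natCast_pentagonal k
  zify
  rcases le_total 0 k with hk | hk
  · rw [abs_of_nonneg hk]; nlinarith
  · rw [abs_of_nonpos hk]; nlinarith

theorem mul_three_mul_sub_one_div_two_eq_iff_pentagonal_eq (n : ℤ) (N : ℕ) :
    n * (3 * n - 1) / 2 = N ↔ pentagonal n = N := by
  rw [← natCast_pentagonal, Nat.cast_inj]

section
variable {R : Type*} [CommRing R]

theorem coeff_prod_range_one_sub_X_pow_of_le {n M : ℕ} (h : n ≤ M) :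
    coeff n (∏ j ∈ range M, (1 - X ^ (j + 1) : R⟦X⟧)) =
      coeff n (∏ j ∈ range n, (1 - X ^ (j + 1) : R⟦X⟧)) := by
  induction M, h using Nat.le_induction with
  | base => rfl
  | succ M hM ih =>
    rw [prod_range_succ, mul_one_sub, map_sub, coeff_mul_X_pow', if_neg (by omega),
      sub_zero, ih]

theorem coeff_prod_range_one_sub_X_pow (n : ℕ) :
    coeff n (∏ j ∈ range n, (1 - X ^ (j + 1) : R⟦X⟧)) = coeff n (pentagonalSeries R) := by
  obtain ⟨M, hM, hn⟩ := ((tendsto_finset_range.eventually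
    (coeff_prod_one_sub_X_pow_eventually_eq R n)).and (eventually_ge_atTop n)).exists
  rw [← hM, coeff_prod_range_one_sub_X_pow_of_le hn]

end

theorem coeff_f_one (n : ℕ) : coeff n (f 1) = coeff n (pentagonalSeries ℤ) := by
  rw [f, coeff_mk, ← coeff_prod_range_one_sub_X_pow, ← Ico_add_one_right_eq_Icc,
    prod_Ico_eq_prod_range]
  simp [add_comm]

theorem sum_pentagonal_indicator_eq_coeff_pentagonalSeries (N : ℕ) :
    (∑ n ∈ Icc (-(N : ℤ)) N, if n * (3 * n - 1) / 2 = (N : ℤ) then (-1 : ℤ) ^ n.natAbs else 0) =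
      coeff N (pentagonalSeries ℤ) := by
  simp_rw [mul_three_mul_sub_one_div_two_eq_iff_pentagonal_eq]
  by_cases hN : N ∈ Set.range pentagonal
  · obtain ⟨k, rfl⟩ := hN
    have hk : k ∈ Icc (-(pentagonal k : ℤ)) (pentagonal k) := by
      have := natAbs_le_pentagonal k
      rw [mem_Icc]; omega
    simp_rw [pentagonal_inj]
    rw [sum_ite_eq', if_pos hk, coeff_pentagonalSeries_pentagonal, Int.coe_negOnePow]
  · rw [coeff_pentagonalSeries_eq_zero ℤ hN]
    exact sum_eq_zero fun n _ => if_neg fun h => hN ⟨n, h⟩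

theorem stmt3 :
    (PowerSeries.mk fun N : ℕ => ∑ n ∈ Finset.Icc (-(N : ℤ)) (N : ℤ),
      if n * (3 * n - 1) / 2 = (N : ℤ) then (-1 : ℤ) ^ n.natAbs else 0) = f 1 := by
  ext N
  rw [coeff_mk, coeff_f_one, sum_pentagonal_indicator_eq_coeff_pentagonalSeries]
end

section
/- Let α ≥ 0, m ≥ 1 with gcd(m,6)=1, k ≥ 1, and set N = 2^6·3^(α+1)·m. Let d be a divisor of N, write d = 2^(r1)·3^(r2)·t with 0 ≤ r1 ≤ 6, 0 ≤ r2 ≤ α+1, t | m. Define G1 = gcd(d,24)^2/gcd(d,2^4·3^(α+1)m)^2, G2 = gcd(d,48)^2/gcd(d,2^4·3^(α+1)m)^2, G3 = gcd(d,2^3·3^(α+1)m)^2/gcd(d,2^4·3^(α+1)m)^2, and L = 3^α·m·(−4G1+G2+4G3−1) + 2^k·(4G3−1). Then L ≥ 0; in fact L ≥ 3·2^k when r1 ≤ 3, and L = 0 when 4 ≤ r1 ≤ 6. -/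
/-!
Write `d = 2^r1 * B` with `B = 3^r2 * t` odd. Since `B` divides the odd part of every modulus
involved, each gcd in `G1, G2, G3` is `2^min(r1, s) * B` or `2^min(r1, s) * gcd(B, 3)`, and `L`
factors as `(4 w^2 - 1) * (3^α m (1 - (gcd(B, 3) / B)^2) + 2^k)` with
`w = 2^min(r1, 3) / 2^min(r1, 4)`. The first factor is `3` for `r1 ≤ 3` and `0` for `r1 ≥ 4`,
and the second factor is at least `2^k`.
-/

theorem Nat.gcd_pow_pow (x a b : ℕ) : Nat.gcd (x ^ a) (x ^ b) = x ^ min a b := by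
  rcases le_total a b with h | h
  · rw [min_eq_left h, Nat.gcd_eq_left (pow_dvd_pow x h)]
  · rw [min_eq_right h, Nat.gcd_eq_right (pow_dvd_pow x h)]

theorem Nat.gcd_pow_mul_pow_mul {x b c : ℕ} (a s : ℕ) (hb : b.Coprime x) (hc : c.Coprime x) :
    Nat.gcd (x ^ a * b) (x ^ s * c) = x ^ min a s * Nat.gcd b c := by
  rw [Nat.Coprime.gcd_mul _ (hc.symm.pow_left s), Nat.Coprime.gcd_mul_right_cancel _
    (hb.pow_right s), Nat.Coprime.gcd_mul_left_cancel _ (hc.symm.pow_left a), Nat.gcd_pow_pow]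

theorem Nat.gcd_pow_mul_pow_mul_of_dvd {x b c : ℕ} (a s : ℕ) (hb : b.Coprime x)
    (hc : c.Coprime x) (hbc : b ∣ c) : Nat.gcd (x ^ a * b) (x ^ s * c) = x ^ min a s * b := by
  rw [Nat.gcd_pow_mul_pow_mul _ _ hb hc, Nat.gcd_eq_left hbc]

theorem eta_order_factor {K : Type*} [Field K] {v b : K} (hv : v ≠ 0) (hb : b ≠ 0)
    (u a c e : K) :
    c * (-4 * ((u * a) ^ 2 / (v * b) ^ 2) + (v * a) ^ 2 / (v * b) ^ 2
      + 4 * ((u * b) ^ 2 / (v * b) ^ 2) - 1) + e * (4 * ((u * b) ^ 2 / (v * b) ^ 2) - 1)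
      = (4 * (u / v) ^ 2 - 1) * (c * (1 - (a / b) ^ 2) + e) := by
  field_simp
  ring

theorem Nat.gcd_div_self_sq_le_one {B : ℕ} (hB : B ≠ 0) (n : ℕ) :
    ((Nat.gcd B n : ℚ) / B) ^ 2 ≤ 1 := by
  refine pow_le_one₀ (by positivity) (div_le_one_of_le₀ ?_ (Nat.cast_nonneg B))
  exact_mod_cast Nat.le_of_dvd (Nat.pos_of_ne_zero hB) (Nat.gcd_dvd_left B n)

theorem four_mul_two_pow_min_div_sq_sub_one (r : ℕ) :
    4 * ((2 : ℚ) ^ min r 3 / 2 ^ min r 4) ^ 2 - 1 = if r ≤ 3 then 3 else 0 := by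
  split_ifs with hr
  · rw [min_eq_left hr, min_eq_left (by omega), div_self (by positivity)]
    norm_num
  · rw [min_eq_right (by omega), min_eq_right (by omega)]
    norm_num

theorem stmt9_general (α m k r1 r2 t d : ℕ) (hgcd : Nat.gcd m 6 = 1)
    (hr2 : r2 ≤ α + 1) (ht : t ∣ m)
    (hdd : d = 2 ^ r1 * 3 ^ r2 * t) :
    let G1 : ℚ := (Nat.gcd d 24 : ℚ) ^ 2 / (Nat.gcd d (2 ^ 4 * 3 ^ (α + 1) * m) : ℚ) ^ 2
    let G2 : ℚ := (Nat.gcd d 48 : ℚ) ^ 2 / (Nat.gcd d (2 ^ 4 * 3 ^ (α + 1) * m) : ℚ) ^ 2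
    let G3 : ℚ := (Nat.gcd d (2 ^ 3 * 3 ^ (α + 1) * m) : ℚ) ^ 2 /
      (Nat.gcd d (2 ^ 4 * 3 ^ (α + 1) * m) : ℚ) ^ 2
    let L : ℚ := 3 ^ α * m * (-4 * G1 + G2 + 4 * G3 - 1) + 2 ^ k * (4 * G3 - 1)
    0 ≤ L ∧ (r1 ≤ 3 → 3 * 2 ^ k ≤ L) ∧ (4 ≤ r1 → L = 0) := by
  intro G1 G2 G3 L
  set B := 3 ^ r2 * t
  have hm2 : m.Coprime 2 := Nat.Coprime.coprime_dvd_right (by norm_num) hgcd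
  have hB2 : B.Coprime 2 :=
    Nat.Coprime.mul_left (Nat.Coprime.pow_left _ (by norm_num)) (hm2.coprime_dvd_left ht)
  have hB0 : B ≠ 0 := by
    rintro h
    norm_num [h] at hB2
  have hd : d = 2 ^ r1 * B := by rw [hdd, mul_assoc]
  have gcd_odd (s : ℕ) : Nat.gcd d (2 ^ s * 3 ^ (α + 1) * m) = 2 ^ min r1 s * B := by
    rw [hd, mul_assoc]
    exact Nat.gcd_pow_mul_pow_mul_of_dvd _ _ hB2
      (Nat.Coprime.mul_left (Nat.Coprime.pow_left _ (by norm_num)) hm2)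
      (mul_dvd_mul (pow_dvd_pow 3 hr2) ht)
  have gcd_three (s : ℕ) : Nat.gcd d (2 ^ s * 3) = 2 ^ min r1 s * Nat.gcd B 3 := by
    rw [hd, Nat.gcd_pow_mul_pow_mul _ _ hB2 (by norm_num)]
  have hL : L = (4 * ((2 : ℚ) ^ min r1 3 / 2 ^ min r1 4) ^ 2 - 1)
      * (3 ^ α * m * (1 - ((Nat.gcd B 3 : ℚ) / B) ^ 2) + 2 ^ k) := by
    simp only [L, G1, G2, G3, gcd_odd, show (24 : ℕ) = 2 ^ 3 * 3 by rfl,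
      show (48 : ℕ) = 2 ^ 4 * 3 by rfl, gcd_three]
    push_cast
    exact eta_order_factor (by positivity) (Nat.cast_ne_zero.mpr hB0) _ _ _ _
  have hsecond : (2 : ℚ) ^ k ≤ 3 ^ α * m * (1 - ((Nat.gcd B 3 : ℚ) / B) ^ 2) + 2 ^ k :=
    le_add_of_nonneg_left <| mul_nonneg (by positivity) <|
      sub_nonneg.mpr (Nat.gcd_div_self_sq_le_one hB0 3)
  rw [hL, four_mul_two_pow_min_div_sq_sub_one]
  split_ifs with hr1
  · have h2k : (0 : ℚ) < 2 ^ k := by positivity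
    exact ⟨by linarith, fun _ => by linarith, fun h => absurd h (by omega)⟩
  · exact ⟨by rw [zero_mul], fun h => absurd h hr1, fun _ => zero_mul _⟩

theorem stmt9 (α m k r1 r2 t d : ℕ) (hm : 1 ≤ m) (hk : 1 ≤ k) (hgcd : Nat.gcd m 6 = 1)
    (hd : d ∣ 2 ^ 6 * 3 ^ (α + 1) * m) (hr1 : r1 ≤ 6) (hr2 : r2 ≤ α + 1) (ht : t ∣ m)
    (hdd : d = 2 ^ r1 * 3 ^ r2 * t) :
    let G1 : ℚ := (Nat.gcd d 24 : ℚ) ^ 2 / (Nat.gcd d (2 ^ 4 * 3 ^ (α + 1) * m) : ℚ) ^ 2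
    let G2 : ℚ := (Nat.gcd d 48 : ℚ) ^ 2 / (Nat.gcd d (2 ^ 4 * 3 ^ (α + 1) * m) : ℚ) ^ 2
    let G3 : ℚ := (Nat.gcd d (2 ^ 3 * 3 ^ (α + 1) * m) : ℚ) ^ 2 /
      (Nat.gcd d (2 ^ 4 * 3 ^ (α + 1) * m) : ℚ) ^ 2
    let L : ℚ := 3 ^ α * m * (-4 * G1 + G2 + 4 * G3 - 1) + 2 ^ k * (4 * G3 - 1)
    0 ≤ L ∧ (r1 ≤ 3 → 3 * 2 ^ k ≤ L) ∧ (4 ≤ r1 → L = 0) :=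
  stmt9_general α m k r1 r2 t d hgcd hr2 ht hdd
end

section
/- Let α ≥ 0, m ≥ 1 with gcd(m,6)=1, k ≥ 1, and let d be a divisor of 2^4·3^(α+2)·m, written d = 2^(r1)·3^(r2)·t with 0 ≤ r1 ≤ 4, 0 ≤ r2 ≤ α+2, t|m. Define D = gcd(d, 2^4·3^(α+2)m)^2, G1 = gcd(d,24)^2/D, G2 = gcd(d,48)^2/D, G3 = gcd(d,2^3·3^(α+1)m)^2/D, G4 = gcd(d,2^4·3^(α+1)m)^2/D, and L = 3^(α+1)·m·(−4G1+G2+4G3−G4) + 3^k·(9G4−1). Then L ≥ 0. -/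
private lemma auxg {a b c d : ℕ} (h1 : Nat.Coprime a d) (h2 : Nat.Coprime b c) :
    Nat.gcd (a * b) (c * d) = Nat.gcd a c * Nat.gcd b d := by
  apply Nat.dvd_antisymm
  · have hx : Nat.gcd (a * b) (c * d) ∣ Nat.gcd (a * b) c * Nat.gcd (a * b) d :=
      gcd_mul_dvd_mul_gcd _ _ _
    rwa [Nat.Coprime.gcd_mul_right_cancel a h2, Nat.Coprime.gcd_mul_left_cancel b h1] at hx
  · exact Nat.dvd_gcd
      (mul_dvd_mul (Nat.gcd_dvd_left a c) (Nat.gcd_dvd_left b d))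
      (mul_dvd_mul (Nat.gcd_dvd_right a c) (Nat.gcd_dvd_right b d))

private lemma powmin (p a b : ℕ) : Nat.gcd (p ^ a) (p ^ b) = p ^ min a b := by
  rcases le_total a b with h | h
  · rw [min_eq_left h, Nat.gcd_eq_left (pow_dvd_pow p h)]
  · rw [min_eq_right h, Nat.gcd_eq_right (pow_dvd_pow p h)]

theorem stmt10 (α m k r1 r2 t d : ℕ) (hm : 1 ≤ m) (hk : 1 ≤ k) (hgcd : Nat.gcd m 6 = 1)
    (hd : d ∣ 2 ^ 4 * 3 ^ (α + 2) * m) (hr1 : r1 ≤ 4) (hr2 : r2 ≤ α + 2) (ht : t ∣ m)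
    (hdd : d = 2 ^ r1 * 3 ^ r2 * t) :
    let D : ℚ := (Nat.gcd d (2 ^ 4 * 3 ^ (α + 2) * m) : ℚ) ^ 2
    let G1 : ℚ := (Nat.gcd d 24 : ℚ) ^ 2 / D
    let G2 : ℚ := (Nat.gcd d 48 : ℚ) ^ 2 / D
    let G3 : ℚ := (Nat.gcd d (2 ^ 3 * 3 ^ (α + 1) * m) : ℚ) ^ 2 / D
    let G4 : ℚ := (Nat.gcd d (2 ^ 4 * 3 ^ (α + 1) * m) : ℚ) ^ 2 / D
    let L : ℚ := 3 ^ (α + 1) * m * (-4 * G1 + G2 + 4 * G3 - G4) + 3 ^ k * (9 * G4 - 1)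
    0 ≤ L := by
  intro D G1 G2 G3 G4 L
  have hm2 : Nat.Coprime m 2 := Nat.Coprime.coprime_dvd_right (by norm_num) hgcd
  have hm3 : Nat.Coprime m 3 := Nat.Coprime.coprime_dvd_right (by norm_num) hgcd
  have ht2 : Nat.Coprime t 2 := Nat.Coprime.coprime_dvd_left ht hm2
  have ht3 : Nat.Coprime t 3 := Nat.Coprime.coprime_dvd_left ht hm3
  have htpos : 0 < t := Nat.pos_of_dvd_of_pos ht hm
  have c23 : Nat.Coprime 2 3 := by norm_num
  -- gcd computations
  have e0 : Nat.gcd d (2 ^ 4 * 3 ^ (α + 2) * m) = 2 ^ r1 * 3 ^ r2 * t :=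
    (Nat.gcd_eq_left hd).trans hdd
  have key : ∀ a b : ℕ, Nat.gcd d (2 ^ a * 3 ^ b * m) =
      2 ^ min r1 a * 3 ^ min r2 b * t := by
    intro a b
    have c1 : Nat.Coprime (2 ^ r1) (3 ^ b * m) :=
      Nat.Coprime.mul_right (c23.pow r1 b) (hm2.symm.pow_left r1)
    have c2 : Nat.Coprime (3 ^ r2 * t) (2 ^ a) :=
      Nat.Coprime.mul (c23.symm.pow r2 a) (ht2.pow_right a)
    have c3 : Nat.Coprime (3 ^ r2) m := hm3.symm.pow_left r2
    have c4 : Nat.Coprime t (3 ^ b) := ht3.pow_right b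
    calc Nat.gcd d (2 ^ a * 3 ^ b * m)
        = Nat.gcd (2 ^ r1 * (3 ^ r2 * t)) (2 ^ a * (3 ^ b * m)) := by
          rw [hdd, mul_assoc, mul_assoc]
      _ = Nat.gcd (2 ^ r1) (2 ^ a) * Nat.gcd (3 ^ r2 * t) (3 ^ b * m) := auxg c1 c2
      _ = Nat.gcd (2 ^ r1) (2 ^ a) * (Nat.gcd (3 ^ r2) (3 ^ b) * Nat.gcd t m) := by
          rw [auxg c3 c4]
      _ = 2 ^ min r1 a * (3 ^ min r2 b * t) := by rw [powmin, powmin, Nat.gcd_eq_left ht]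
      _ = 2 ^ min r1 a * 3 ^ min r2 b * t := by ring
  have key2 : ∀ a b : ℕ, Nat.gcd d (2 ^ a * 3 ^ b) = 2 ^ min r1 a * 3 ^ min r2 b := by
    intro a b
    have c1 : Nat.Coprime (2 ^ r1) (3 ^ b * 1) :=
      Nat.Coprime.mul_right (c23.pow r1 b) (Nat.coprime_one_right _)
    have c2 : Nat.Coprime (3 ^ r2 * t) (2 ^ a) :=
      Nat.Coprime.mul (c23.symm.pow r2 a) (ht2.pow_right a)
    have c3 : Nat.Coprime (3 ^ r2) 1 := Nat.coprime_one_right _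
    have c4 : Nat.Coprime t (3 ^ b) := ht3.pow_right b
    calc Nat.gcd d (2 ^ a * 3 ^ b)
        = Nat.gcd (2 ^ r1 * (3 ^ r2 * t)) (2 ^ a * (3 ^ b * 1)) := by
          rw [hdd, mul_assoc, mul_one]
      _ = Nat.gcd (2 ^ r1) (2 ^ a) * Nat.gcd (3 ^ r2 * t) (3 ^ b * 1) := auxg c1 c2
      _ = Nat.gcd (2 ^ r1) (2 ^ a) * (Nat.gcd (3 ^ r2) (3 ^ b) * Nat.gcd t 1) := by
          rw [auxg c3 c4]
      _ = 2 ^ min r1 a * 3 ^ min r2 b := by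
          rw [powmin, powmin, Nat.gcd_one_right, mul_one]
  have e1 : Nat.gcd d 24 = 2 ^ min r1 3 * 3 ^ min r2 1 := by
    have := key2 3 1; norm_num at this ⊢; exact this
  have e2 : Nat.gcd d 48 = 2 ^ r1 * 3 ^ min r2 1 := by
    have := key2 4 1
    norm_num [min_eq_left hr1] at this ⊢; exact this
  have e3 : Nat.gcd d (2 ^ 3 * 3 ^ (α + 1) * m) = 2 ^ min r1 3 * 3 ^ min r2 (α + 1) * t :=
    key 3 (α + 1)
  have e4 : Nat.gcd d (2 ^ 4 * 3 ^ (α + 1) * m) = 2 ^ r1 * 3 ^ min r2 (α + 1) * t := by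
    have := key 4 (α + 1); rwa [min_eq_left hr1] at this
  simp only [L, G1, G2, G3, G4, D, e0, e1, e2, e3, e4]
  push_cast
  have htq : (1:ℚ) ≤ (t:ℚ) := by exact_mod_cast htpos
  have htne : (t:ℚ) ≠ 0 := by
    have : (0:ℚ) < t := by exact_mod_cast htpos
    exact ne_of_gt this
  have hDpos : (0:ℚ) < ((2:ℚ) ^ r1 * 3 ^ r2 * (t:ℚ)) ^ 2 := by positivity
  have ha1 : (0:ℚ) ≤ 2 * 2 ^ (r1 ⊓ 3) - (2:ℚ) ^ r1 := by
    have h : (2:ℚ) ^ r1 ≤ 2 ^ (r1 ⊓ 3 + 1) := pow_le_pow_right₀ (by norm_num) (by omega)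
    rw [pow_succ] at h; linarith
  have hb1 : (0:ℚ) ≤ 3 ^ (r2 ⊓ (α + 1)) * (t:ℚ) - 3 ^ (r2 ⊓ 1) := by
    have h1 : (3:ℚ) ^ (r2 ⊓ 1) ≤ 3 ^ (r2 ⊓ (α + 1)) := pow_le_pow_right₀ (by norm_num) (by omega)
    have hp : (0:ℚ) < 3 ^ (r2 ⊓ (α + 1)) := by positivity
    nlinarith
  have hc1 : (0:ℚ) ≤ 3 * 3 ^ (r2 ⊓ (α + 1)) - (3:ℚ) ^ r2 := by
    have h : (3:ℚ) ^ r2 ≤ 3 ^ (r2 ⊓ (α + 1) + 1) := pow_le_pow_right₀ (by norm_num) (by omega)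
    rw [pow_succ] at h; linarith
  have hEq :
      3 ^ (α + 1) * (m:ℚ) *
          (-4 * ((2 ^ (r1 ⊓ 3) * 3 ^ (r2 ⊓ 1)) ^ 2 / (2 ^ r1 * 3 ^ r2 * (t:ℚ)) ^ 2) +
                (2 ^ r1 * 3 ^ (r2 ⊓ 1)) ^ 2 / (2 ^ r1 * 3 ^ r2 * (t:ℚ)) ^ 2 +
              4 * ((2 ^ (r1 ⊓ 3) * 3 ^ (r2 ⊓ (α + 1)) * (t:ℚ)) ^ 2 / (2 ^ r1 * 3 ^ r2 * (t:ℚ)) ^ 2) -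
            (2 ^ r1 * 3 ^ (r2 ⊓ (α + 1)) * (t:ℚ)) ^ 2 / (2 ^ r1 * 3 ^ r2 * (t:ℚ)) ^ 2) +
        3 ^ k * (9 * ((2 ^ r1 * 3 ^ (r2 ⊓ (α + 1)) * (t:ℚ)) ^ 2 / (2 ^ r1 * 3 ^ r2 * (t:ℚ)) ^ 2) - 1) =
      (3 ^ (α + 1) * (m:ℚ) *
          ((2 * 2 ^ (r1 ⊓ 3) - 2 ^ r1) * (2 * 2 ^ (r1 ⊓ 3) + 2 ^ r1)) *
          ((3 ^ (r2 ⊓ (α + 1)) * (t:ℚ) - 3 ^ (r2 ⊓ 1)) * (3 ^ (r2 ⊓ (α + 1)) * (t:ℚ) + 3 ^ (r2 ⊓ 1))) +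
        3 ^ k * ((2:ℚ) ^ r1 * (t:ℚ)) ^ 2 *
          ((3 * 3 ^ (r2 ⊓ (α + 1)) - 3 ^ r2) * (3 * 3 ^ (r2 ⊓ (α + 1)) + 3 ^ r2))) /
        ((2:ℚ) ^ r1 * 3 ^ r2 * (t:ℚ)) ^ 2 := by
    field_simp
    ring
  rw [hEq]
  apply div_nonneg _ (le_of_lt hDpos)
  have hN1 : (0:ℚ) ≤ 3 ^ (α + 1) * (m:ℚ) *
      ((2 * 2 ^ (r1 ⊓ 3) - 2 ^ r1) * (2 * 2 ^ (r1 ⊓ 3) + 2 ^ r1)) *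
      ((3 ^ (r2 ⊓ (α + 1)) * (t:ℚ) - 3 ^ (r2 ⊓ 1)) * (3 ^ (r2 ⊓ (α + 1)) * (t:ℚ) + 3 ^ (r2 ⊓ 1))) := by
    apply mul_nonneg (mul_nonneg (by positivity) (mul_nonneg ha1 (by positivity)))
    exact mul_nonneg hb1 (by positivity)
  have hN2 : (0:ℚ) ≤ 3 ^ k * ((2:ℚ) ^ r1 * (t:ℚ)) ^ 2 *
      ((3 * 3 ^ (r2 ⊓ (α + 1)) - 3 ^ r2) * (3 * 3 ^ (r2 ⊓ (α + 1)) + 3 ^ r2)) := by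
    exact mul_nonneg (by positivity) (mul_nonneg hc1 (by positivity))
  linarith
end
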